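/- arXiv:2601.10538 — 3 statements merged into one kernel-verified Lean document; each statement's English description precedes it below -/
import Mathlib

section
/- For every ISAC network, every pair (s, f) ∈ R is achieved by a valid assignment in which, for each undirected link {i,j}, at least one of the two directions carries zero rates: either f_{(i,j)} = s_{(i,j)} = 0 or f_{(j,i)} = s_{(j,i)} = 0. -/
/-- An ISAC network on a finite node type `V`: a symmetric, irreflexive set of
directed links `E`, a source `Tx`, a sink `Rx`, a nonnegative capacity `c` on
undirected links (unordered pairs), and a sensing region `A`. -/
structure ISACNetwork (V : Type) [Fintype V] [DecidableEq V] where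
  E : Finset (V × V)
  symm : ∀ i j : V, (i, j) ∈ E → (j, i) ∈ E
  irrefl : ∀ i : V, (i, i) ∉ E
  Tx : V
  Rx : V
  TxNeRx : Tx ≠ Rx
  c : Sym2 V → ℝ
  c_nonneg : ∀ u : Sym2 V, 0 ≤ c u
  A : Finset V

namespace ISACNetwork

variable {V : Type} [Fintype V] [DecidableEq V]

/-- `E(A)`: directed links with both endpoints in the sensing region. -/
def EA (N : ISACNetwork V) : Finset (V × V) :=
  N.E.filter fun e => e.1 ∈ N.A ∧ e.2 ∈ N.A

/-- `U(A)`: undirected links with both endpoints in the sensing region. -/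
def UA (N : ISACNetwork V) : Finset (Sym2 V) :=
  N.EA.image (fun e => Sym2.mk e.1 e.2)

/-- A valid assignment of communication rates `f` and sensing rates `s`:
nonnegative rates for which there is a nonnegative capacity split `ca` of the
undirected link capacities with `f e + s e ≤ ca e` on each directed link, no
communication into the source or out of the sink, and flow conservation at
every intermediate node. -/
def Valid (N : ISACNetwork V) (f s : V × V → ℝ) : Prop :=
  (∀ e ∈ N.E, 0 ≤ f e) ∧ (∀ e ∈ N.E, 0 ≤ s e) ∧
  ∃ ca : V × V → ℝ,
    (∀ e ∈ N.E, 0 ≤ ca e) ∧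
    (∀ i j : V, (i, j) ∈ N.E → ca (i, j) + ca (j, i) = N.c (Sym2.mk i j)) ∧
    (∀ e ∈ N.E, f e + s e ≤ ca e) ∧
    (∀ i : V, (i, N.Tx) ∈ N.E → f (i, N.Tx) = 0) ∧
    (∀ j : V, (N.Rx, j) ∈ N.E → f (N.Rx, j) = 0) ∧
    (∀ j : V, j ≠ N.Tx → j ≠ N.Rx →
      ∑ i ∈ Finset.univ.filter (fun i => (i, j) ∈ N.E), f (i, j)
        = ∑ k ∈ Finset.univ.filter (fun k => (j, k) ∈ N.E), f (j, k))

/-- The sensing fidelity achieved by a sensing-rate assignment. -/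
def sensOf (N : ISACNetwork V) (s : V × V → ℝ) : ℝ := ∑ e ∈ N.EA, s e

/-- The throughput achieved by a communication-rate assignment. -/
def flowOf (N : ISACNetwork V) (f : V × V → ℝ) : ℝ :=
  ∑ j ∈ Finset.univ.filter (fun j => (N.Tx, j) ∈ N.E), f (N.Tx, j)

/-- The sensing–throughput region: all pairs `(s, f)` achieved by a valid
assignment. -/
def Region (N : ISACNetwork V) : Set (ℝ × ℝ) :=
  { p | ∃ fr sr : V × V → ℝ, N.Valid fr sr ∧ N.sensOf sr = p.1 ∧ N.flowOf fr = p.2 }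

end ISACNetwork
/-!
Cancel opposite flows on every link, `f (i, j) ↦ f (i, j) - min (f (i, j)) (f (j, i))`: this
keeps flow conservation, and the throughput too because nothing flows into `Tx`. Then orient
each link towards the direction with the larger original flow (ties broken arbitrarily), which
is the only one still carrying flow, and move onto it the sensing rates of both directions and
the whole link capacity. Cancelling only frees capacity, so the kept direction fits:
its load is at most `f e + s e + s e.swap ≤ ca e + ca e.swap = c e`.
-/

open Finset

theorem exists_orientation_le_swap {α : Type*} (g : α × α → ℝ) :
    ∃ K : Set (α × α), (∀ e : α × α, e.1 ≠ e.2 → (e ∈ K ↔ e.swap ∉ K)) ∧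
      ∀ e ∉ K, g e ≤ g e.swap := by
  let _ := IsWellOrder.linearOrder (WellOrderingRel (α := α))
  let key : α × α → ℝ ×ₗ α := fun e => toLex (g e, e.1)
  refine ⟨{e | key e.swap < key e}, fun e hne => ?_, fun e he => ?_⟩
  · have hkey : key e ≠ key e.swap := fun h => hne (congrArg (fun k => (ofLex k).2) h)
    simp only [Set.mem_ofPred_eq, Prod.swap_swap, not_lt]
    exact ⟨le_of_lt, fun h => lt_of_le_of_ne h hkey.symm⟩
  · have hle : ¬ key e.swap < key e := he
    exact Prod.Lex.monotone_fst (key e) (key e.swap) (not_lt.mp hle)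

theorem Finset.sum_indicator_add_swap {α M : Type*} [AddCommMonoid M]
    {S : Finset (α × α)} (hS : ∀ e ∈ S, e.swap ∈ S) {K : Set (α × α)}
    (hK : ∀ e ∈ S, (e ∈ K ↔ e.swap ∉ K)) (g : α × α → M) :
    ∑ e ∈ S, K.indicator (fun e => g e + g e.swap) e = ∑ e ∈ S, g e := by
  classical
  have hswap : ∑ e ∈ S.filter (· ∈ K), g e.swap = ∑ e ∈ S.filter (· ∉ K), g e := by
    refine sum_nbij' Prod.swap Prod.swap ?_ ?_ (fun _ _ => rfl) (fun _ _ => rfl)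
      (fun _ _ => rfl)
    · intro e he
      rw [mem_filter] at he ⊢
      exact ⟨hS e he.1, (hK e he.1).mp he.2⟩
    · intro e he
      rw [mem_filter] at he ⊢
      exact ⟨hS e he.1, (hK e.swap (hS e he.1)).mpr (by rw [Prod.swap_swap]; exact he.2)⟩
  simp only [Set.indicator_apply, ← sum_filter, sum_add_distrib, hswap,
    sum_filter_add_sum_filter_not]

def netFlow {α : Type*} (f : α × α → ℝ) (e : α × α) : ℝ := f e - min (f e) (f e.swap)

section netFlow

variable {α : Type*} (f : α × α → ℝ) (e : α × α)

theorem netFlow_nonneg : 0 ≤ netFlow f e := sub_nonneg.mpr (min_le_left _ _)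

variable {f e}

theorem netFlow_eq_zero (h : f e ≤ f e.swap) : netFlow f e = 0 := by
  simp [netFlow, min_eq_left h]

theorem netFlow_of_swap_eq_zero (h : f e.swap = 0) (he : 0 ≤ f e) : netFlow f e = f e := by
  simp [netFlow, h, min_eq_right he]

theorem netFlow_le (he : 0 ≤ f e) (hswap : 0 ≤ f e.swap) : netFlow f e ≤ f e :=
  sub_le_self _ (le_min he hswap)

end netFlow

namespace ISACNetwork

variable {V : Type} [Fintype V] [DecidableEq V] (N : ISACNetwork V)

theorem swap_mem_E {e : V × V} (he : e ∈ N.E) : e.swap ∈ N.E := N.symm e.1 e.2 he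

theorem ne_of_mem_E {i j : V} (h : (i, j) ∈ N.E) : i ≠ j := by
  rintro rfl
  exact N.irrefl i h

theorem filter_mem_E_in_eq_out (j : V) :
    univ.filter (fun i => (i, j) ∈ N.E) = univ.filter (fun k => (j, k) ∈ N.E) := by
  ext x
  simp only [mem_filter, mem_univ, true_and]
  exact ⟨N.symm x j, N.symm j x⟩

theorem netFlow_conservation {f : V × V → ℝ} {j : V}
    (h : ∑ i ∈ univ.filter (fun i => (i, j) ∈ N.E), f (i, j)
      = ∑ k ∈ univ.filter (fun k => (j, k) ∈ N.E), f (j, k)) :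
    ∑ i ∈ univ.filter (fun i => (i, j) ∈ N.E), netFlow f (i, j)
      = ∑ k ∈ univ.filter (fun k => (j, k) ∈ N.E), netFlow f (j, k) := by
  have hmin : ∑ i ∈ univ.filter (fun i => (i, j) ∈ N.E), min (f (i, j)) (f (j, i))
      = ∑ k ∈ univ.filter (fun k => (j, k) ∈ N.E), min (f (j, k)) (f (k, j)) := by
    rw [← N.filter_mem_E_in_eq_out j]
    exact sum_congr rfl fun _ _ => min_comm _ _
  simp only [netFlow, Prod.swap_prod_mk, sum_sub_distrib, h, hmin]

theorem Valid.flowOf_netFlow {f s : V × V → ℝ} (hv : N.Valid f s) :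
    N.flowOf (netFlow f) = N.flowOf f := by
  obtain ⟨hf, -, -, -, -, -, hTx, -⟩ := hv
  refine sum_congr rfl fun j hj => ?_
  have hjE : (N.Tx, j) ∈ N.E := (mem_filter.mp hj).2
  exact netFlow_of_swap_eq_zero (hTx j (N.swap_mem_E hjE)) (hf _ hjE)

theorem sensOf_indicator_add_swap {K : Set (V × V)}
    (hK : ∀ e : V × V, e.1 ≠ e.2 → (e ∈ K ↔ e.swap ∉ K)) (s : V × V → ℝ) :
    N.sensOf (K.indicator fun e => s e + s e.swap) = N.sensOf s := by
  refine sum_indicator_add_swap (fun e he => ?_) (fun e he => hK e ?_) s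
  · obtain ⟨heE, h1, h2⟩ := mem_filter.mp he
    exact mem_filter.mpr ⟨N.swap_mem_E heE, h2, h1⟩
  · exact N.ne_of_mem_E (mem_filter.mp he).1

theorem valid_netFlow_indicator {fr sr : V × V → ℝ} (hv : N.Valid fr sr) {K : Set (V × V)}
    (hK : ∀ e : V × V, e.1 ≠ e.2 → (e ∈ K ↔ e.swap ∉ K))
    (hfK : ∀ e ∉ K, fr e ≤ fr e.swap) :
    N.Valid (netFlow fr) (K.indicator fun e => sr e + sr e.swap) := by
  obtain ⟨hf, hs, ca, -, hcsum, hcap, hTx, hRx, hcons⟩ := hv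
  refine ⟨fun e _ => netFlow_nonneg fr e, fun e he => ?_,
    K.indicator fun e => N.c (Sym2.mk e.1 e.2),
    fun e _ => Set.indicator_nonneg (fun e _ => N.c_nonneg _) e, fun i j hij => ?_,
    fun e he => ?_, fun i hi => ?_, fun j hj => ?_,
    fun j hjTx hjRx => N.netFlow_conservation (hcons j hjTx hjRx)⟩
  · exact Set.indicator_apply_nonneg fun _ => add_nonneg (hs e he) (hs _ (N.swap_mem_E he))
  · by_cases hk : (i, j) ∈ K
    · have hk' : (j, i) ∉ K := (hK (i, j) (N.ne_of_mem_E hij)).mp hk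
      simp [Set.indicator_of_mem hk, Set.indicator_of_notMem hk']
    · have hk' : (j, i) ∈ K := (hK (j, i) (N.ne_of_mem_E hij).symm).mpr hk
      simp [Set.indicator_of_mem hk', Set.indicator_of_notMem hk, Sym2.eq_swap]
  · by_cases hk : e ∈ K
    · have hswap := N.swap_mem_E he
      have hnet := netFlow_le (hf e he) (hf _ hswap)
      have hsplit : ca e + ca e.swap = N.c (Sym2.mk e.1 e.2) := hcsum e.1 e.2 he
      simp only [Set.indicator_of_mem hk]
      linarith [hcap e he, hcap _ hswap, hf _ hswap]
    · simp [netFlow_eq_zero (hfK e hk), Set.indicator_of_notMem hk]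
  · exact netFlow_eq_zero (by rw [hTx i hi]; exact hf _ (N.swap_mem_E hi))
  · exact netFlow_eq_zero (by rw [hRx j hj]; exact hf _ (N.swap_mem_E hj))

end ISACNetwork

/-- Every pair `(s, f) ∈ R` is achieved by a valid assignment in which, for
each undirected link `{i, j}`, at least one of the two directions carries zero
communication and sensing rates. -/
theorem one_direction_off {V : Type} [Fintype V] [DecidableEq V]
    (N : ISACNetwork V) (s f : ℝ) (h : (s, f) ∈ N.Region) :
    ∃ fr sr : V × V → ℝ, N.Valid fr sr ∧ N.sensOf sr = s ∧ N.flowOf fr = f ∧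
      ∀ i j : V, (i, j) ∈ N.E →
        (fr (i, j) = 0 ∧ sr (i, j) = 0) ∨ (fr (j, i) = 0 ∧ sr (j, i) = 0) := by
  obtain ⟨fr, sr, hv, hsens, hflow⟩ := h
  obtain ⟨K, hK, hfK⟩ := exists_orientation_le_swap fr
  set sr' := K.indicator fun e => sr e + sr e.swap
  have hoff : ∀ e ∉ K, netFlow fr e = 0 ∧ sr' e = 0 :=
    fun e he => ⟨netFlow_eq_zero (hfK e he), Set.indicator_of_notMem he _⟩
  refine ⟨netFlow fr, sr', N.valid_netFlow_indicator hv hK hfK,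
    (N.sensOf_indicator_add_swap hK sr).trans hsens,
    hv.flowOf_netFlow.trans hflow, fun i j hij => ?_⟩
  by_cases hk : (i, j) ∈ K
  · exact Or.inr (hoff _ ((hK (i, j) (N.ne_of_mem_E hij)).mp hk))
  · exact Or.inl (hoff _ hk)
end

section
/- In a one-dimensional ISAC network with K nodes and nonempty sensing link set U(A), free sensing occurs if and only if some sensing link has capacity strictly above the bottleneck: there exists s > 0 with (s, f*) ∈ R if and only if there exists u ∈ U(A) with c_u > c_min, where c_min := min_{1 ≤ j ≤ K−1} c_{{j,j+1}} and f* is the maximum throughput. -/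
/-- The one-dimensional ISAC network with `K ≥ 2` nodes: nodes `0, …, K-1`
(standing for `1, …, K`), links between consecutive nodes in both directions,
source node `0` and sink node `K-1`. -/
def pathNetwork (K : ℕ) (hK : 2 ≤ K) (cap : Sym2 (Fin K) → ℝ)
    (hcap : ∀ u, 0 ≤ cap u) (A : Finset (Fin K)) : ISACNetwork (Fin K) where
  E := Finset.univ.filter fun e : Fin K × Fin K =>
    e.1.val + 1 = e.2.val ∨ e.2.val + 1 = e.1.val
  symm := by
    intro i j h
    simp only [Finset.mem_filter, Finset.mem_univ, true_and] at h ⊢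
    tauto
  irrefl := by
    intro i h
    simp only [Finset.mem_filter, Finset.mem_univ, true_and] at h
    omega
  Tx := ⟨0, by omega⟩
  Rx := ⟨K - 1, by omega⟩
  TxNeRx := by
    rw [Fin.ne_iff_vne]
    simp only [ne_eq]
    omega
  c := cap
  c_nonneg := hcap
  A := A

/-- `c_min`: the smallest undirected link capacity of the one-dimensional
ISAC network, `min_{1 ≤ j ≤ K-1} c_{{j,j+1}}`. -/
noncomputable def cmin (K : ℕ) (hK : 2 ≤ K) (cap : Sym2 (Fin K) → ℝ) : ℝ :=
  (Finset.univ : Finset (Fin (K - 1))).inf'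
    (Finset.univ_nonempty_iff.mpr ⟨⟨0, by omega⟩⟩)
    (fun j => cap (Sym2.mk (⟨j.val, by have := j.isLt; omega⟩ : Fin K)
      (⟨j.val + 1, by have := j.isLt; omega⟩ : Fin K)))

open Finset

lemma ISACNetwork.sensOf_single {V : Type} [Fintype V] [DecidableEq V] (N : ISACNetwork V)
    (e : V × V) (ε : ℝ) : N.sensOf (Pi.single e ε) = if e ∈ N.EA then ε else 0 :=
  sum_pi_single' e ε N.EA

def forwardFlow (K : ℕ) (r : ℝ) : Fin K × Fin K → ℝ :=
  fun e => if e.1.val + 1 = e.2.val then r else 0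

section PathNetwork

variable {K : ℕ} {hK : 2 ≤ K} {cap : Sym2 (Fin K) → ℝ} {hcap : ∀ u, 0 ≤ cap u}
  {A : Finset (Fin K)}

local notation "𝒩" => pathNetwork K hK cap hcap A

lemma cmin_le_cap {a b : Fin K} (hab : a.val + 1 = b.val) : cmin K hK cap ≤ cap s(a, b) := by
  obtain ⟨a, ha⟩ := a
  obtain ⟨b, hb⟩ := b
  obtain rfl : a + 1 = b := hab
  exact inf'_le _ (mem_univ (⟨a, by omega⟩ : Fin (K - 1)))

lemma exists_cap_eq_cmin :
    ∃ a b : Fin K, a.val + 1 = b.val ∧ cap s(a, b) = cmin K hK cap := by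
  obtain ⟨j, -, hj⟩ :=
    exists_mem_eq_inf' (univ_nonempty_iff.mpr ⟨(⟨0, by omega⟩ : Fin (K - 1))⟩)
      fun j : Fin (K - 1) => cap s((⟨j.val, by omega⟩ : Fin K), ⟨j.val + 1, by omega⟩)
  exact ⟨_, _, rfl, hj.symm⟩

lemma cmin_nonneg (hcap : ∀ u, 0 ≤ cap u) : 0 ≤ cmin K hK cap :=
  le_inf' _ _ fun _ _ => hcap _

lemma pathNetwork_mem_E {i j : Fin K} :
    (i, j) ∈ (𝒩).E ↔ i.val + 1 = j.val ∨ j.val + 1 = i.val := by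
  simp [pathNetwork]

lemma pathNetwork_Tx_val : (𝒩).Tx.val = 0 := rfl

lemma pathNetwork_Rx_val : (𝒩).Rx.val = K - 1 := rfl

lemma pathNetwork_flowOf (fr : Fin K × Fin K → ℝ) :
    (𝒩).flowOf fr = fr (⟨0, by omega⟩, ⟨1, by omega⟩) := by
  have hout :
      univ.filter (fun j => ((𝒩).Tx, j) ∈ (𝒩).E) = {(⟨1, by omega⟩ : Fin K)} := by
    ext j
    simp [pathNetwork, Fin.ext_iff]
    omega
  rw [ISACNetwork.flowOf, hout, sum_singleton]
  rfl

lemma pathNetwork_sum_in {a b c : Fin K} (hab : a.val + 1 = b.val)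
    (hbc : b.val + 1 = c.val) (g : Fin K → ℝ) :
    ∑ i ∈ univ.filter (fun i => (i, b) ∈ (𝒩).E), g i = g a + g c := by
  have hin : univ.filter (fun i => (i, b) ∈ (𝒩).E) = {a, c} := by
    ext i
    simp [pathNetwork, Fin.ext_iff]
    omega
  rw [hin, sum_pair (by simp [Fin.ext_iff]; omega)]

lemma pathNetwork_sum_out {a b c : Fin K} (hab : a.val + 1 = b.val)
    (hbc : b.val + 1 = c.val) (g : Fin K → ℝ) :
    ∑ k ∈ univ.filter (fun k => (b, k) ∈ (𝒩).E), g k = g a + g c := by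
  have hout : univ.filter (fun k => (b, k) ∈ (𝒩).E) = {a, c} := by
    ext i
    simp [pathNetwork, Fin.ext_iff]
    omega
  rw [hout, sum_pair (by simp [Fin.ext_iff]; omega)]

lemma pathNetwork_exists_forward_mem_EA {x y : Fin K} (he : (x, y) ∈ (𝒩).EA) :
    ∃ a b : Fin K, a.val + 1 = b.val ∧ (a, b) ∈ (𝒩).EA ∧ s(a, b) = s(x, y) := by
  obtain ⟨hE, hx, hy⟩ := mem_filter.1 he
  rcases pathNetwork_mem_E.1 hE with h | h
  · exact ⟨x, y, h, he, rfl⟩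
  · exact ⟨y, x, h, mem_filter.2 ⟨(𝒩).symm _ _ hE, hy, hx⟩, Sym2.eq_swap⟩

variable {fr sr : Fin K × Fin K → ℝ}

lemma pathNetwork_netFlow_eq_flowOf (hv : (𝒩).Valid fr sr) {a b : Fin K}
    (hab : a.val + 1 = b.val) : fr (a, b) - fr (b, a) = (𝒩).flowOf fr := by
  obtain ⟨-, -, -, -, -, -, hTx, -, hcons⟩ := hv
  induction h : a.val generalizing a b with
  | zero =>
    obtain rfl : a = (𝒩).Tx := Fin.ext h
    rw [hTx b (pathNetwork_mem_E.2 (Or.inr hab)), sub_zero, pathNetwork_flowOf]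
    congr
    exact Fin.ext (by simp [← hab, pathNetwork_Tx_val])
  | succ n ih =>
    have hb := b.isLt
    let p : Fin K := ⟨n, by omega⟩
    have hcons_a := hcons a (by simp [Fin.ext_iff, pathNetwork_Tx_val, h])
      (by simp [Fin.ext_iff, pathNetwork_Rx_val]; omega)
    rw [pathNetwork_sum_in (a := p) (c := b) (by simp [p, h]) hab,
      pathNetwork_sum_out (a := p) (c := b) (by simp [p, h]) hab] at hcons_a
    linarith [ih (a := p) (b := a) (by simp [p, h]) rfl]

lemma pathNetwork_flowOf_add_sens_le_cap (hv : (𝒩).Valid fr sr) {a b : Fin K}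
    (hab : a.val + 1 = b.val) : (𝒩).flowOf fr + sr (a, b) + sr (b, a) ≤ cap s(a, b) := by
  have hnet := pathNetwork_netFlow_eq_flowOf hv hab
  obtain ⟨hf, -, ca, -, hsplit, hle, -⟩ := hv
  have hab' : (a, b) ∈ (𝒩).E := pathNetwork_mem_E.2 (Or.inl hab)
  have hba' : (b, a) ∈ (𝒩).E := pathNetwork_mem_E.2 (Or.inr hab)
  have hca : ca (a, b) + ca (b, a) = cap s(a, b) := hsplit a b hab'
  linarith [hle _ hab', hle _ hba', hf _ hba']

lemma pathNetwork_flowOf_add_le_cap (hv : (𝒩).Valid fr sr) {x y : Fin K}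
    (he : (x, y) ∈ (𝒩).E) : (𝒩).flowOf fr + sr (x, y) ≤ cap s(x, y) := by
  have hs := hv.2.1 _ ((𝒩).symm _ _ he)
  rcases pathNetwork_mem_E.1 he with h | h
  · linarith [pathNetwork_flowOf_add_sens_le_cap hv h]
  · rw [Sym2.eq_swap]
    linarith [pathNetwork_flowOf_add_sens_le_cap hv h]

lemma pathNetwork_flowOf_le_cmin (hv : (𝒩).Valid fr sr) :
    (𝒩).flowOf fr ≤ cmin K hK cap := by
  obtain ⟨a, b, hab, hmin⟩ := exists_cap_eq_cmin (hK := hK) (cap := cap)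
  have he : (a, b) ∈ (𝒩).E := pathNetwork_mem_E.2 (Or.inl hab)
  linarith [pathNetwork_flowOf_add_le_cap hv he, hv.2.1 _ he]

lemma pathNetwork_flowOf_forwardFlow (r : ℝ) : (𝒩).flowOf (forwardFlow K r) = r := by
  simp [pathNetwork_flowOf, forwardFlow]

lemma pathNetwork_forwardFlow_conserved (r : ℝ) {j : Fin K} (hT : j ≠ (𝒩).Tx)
    (hR : j ≠ (𝒩).Rx) :
    ∑ i ∈ univ.filter (fun i => (i, j) ∈ (𝒩).E), forwardFlow K r (i, j)
      = ∑ k ∈ univ.filter (fun k => (j, k) ∈ (𝒩).E), forwardFlow K r (j, k) := by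
  have h0 : j.val ≠ 0 := fun h => hT (Fin.ext h)
  have hlast : j.val + 1 < K := by
    have := j.isLt
    have : j.val ≠ K - 1 := fun h => hR (Fin.ext h)
    omega
  let p : Fin K := ⟨j.val - 1, by omega⟩
  have hpj : p.val + 1 = j.val := by simp [p]; omega
  rw [pathNetwork_sum_in (c := ⟨j.val + 1, hlast⟩) hpj rfl,
    pathNetwork_sum_out (c := ⟨j.val + 1, hlast⟩) hpj rfl]
  simp only [forwardFlow]
  rw [if_pos (by omega), if_neg (by omega), if_neg (by omega), if_pos trivial]
  ring

lemma pathNetwork_valid_forwardFlow {a b : Fin K} (hab : a.val + 1 = b.val) {ε : ℝ}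
    (hε : 0 ≤ ε) (hcab : cmin K hK cap + ε ≤ cap s(a, b)) :
    (𝒩).Valid (forwardFlow K (cmin K hK cap)) (Pi.single (a, b) ε) := by
  refine ⟨fun e _ => ?_, fun e _ => ?_,
    fun e => if e.1.val + 1 = e.2.val then cap s(e.1, e.2) else 0, fun e _ => ?_,
    fun i j hij => ?_, fun e he => ?_, fun i hi => ?_, fun j hj => ?_,
    fun j hT hR => pathNetwork_forwardFlow_conserved _ hT hR⟩
  · simp only [forwardFlow]
    split_ifs
    exacts [cmin_nonneg hcap, le_rfl]
  · rw [Pi.single_apply]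
    split_ifs
    exacts [hε, le_rfl]
  · dsimp only
    split_ifs
    exacts [hcap _, le_rfl]
  · dsimp only
    rcases pathNetwork_mem_E.1 hij with h | h
    · rw [if_pos h, if_neg (by omega), add_zero]
      rfl
    · rw [if_neg (by omega), if_pos h, zero_add, Sym2.eq_swap]
      rfl
  · simp only [forwardFlow, Pi.single_apply]
    split_ifs with hfwd hsingle
    · rwa [hsingle]
    · simpa using cmin_le_cap hfwd
    · simp_all
    · simp
  · simp [forwardFlow, pathNetwork_Tx_val]
  · simp only [forwardFlow, pathNetwork_Rx_val]
    exact if_neg (by omega)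

lemma pathNetwork_isGreatest_throughput :
    IsGreatest {f : ℝ | ∃ s : ℝ, (s, f) ∈ (𝒩).Region} (cmin K hK cap) := by
  refine ⟨?_, ?_⟩
  · obtain ⟨a, b, hab, hmin⟩ := exists_cap_eq_cmin (hK := hK) (cap := cap)
    exact ⟨_, _, _, pathNetwork_valid_forwardFlow hab le_rfl (by rw [hmin, add_zero]), rfl,
      pathNetwork_flowOf_forwardFlow _⟩
  · rintro f ⟨-, fr, sr, hv, -, rfl⟩
    exact pathNetwork_flowOf_le_cmin hv

end PathNetwork

theorem oneD_free_sensing_general {K : ℕ} (hK : 2 ≤ K) (cap : Sym2 (Fin K) → ℝ)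
    (hcap : ∀ u, 0 ≤ cap u) (A : Finset (Fin K))
    (fstar : ℝ)
    (hfstar : IsGreatest
      {f : ℝ | ∃ s : ℝ, (s, f) ∈ (pathNetwork K hK cap hcap A).Region} fstar) :
    (∃ s : ℝ, 0 < s ∧ (s, fstar) ∈ (pathNetwork K hK cap hcap A).Region) ↔
      ∃ u ∈ (pathNetwork K hK cap hcap A).UA, cmin K hK cap < cap u := by
  obtain rfl := hfstar.unique pathNetwork_isGreatest_throughput
  constructor
  · rintro ⟨-, hs, fr, sr, hv, rfl, hflow⟩
    obtain ⟨e, he, hpos⟩ : ∃ e ∈ (pathNetwork K hK cap hcap A).EA, 0 < sr e :=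
      exists_lt_of_sum_lt (f := 0) (by simpa [ISACNetwork.sensOf] using hs)
    refine ⟨s(e.1, e.2), mem_image_of_mem _ he, ?_⟩
    linarith [pathNetwork_flowOf_add_le_cap hv (mem_filter.1 he).1, hflow]
  · rintro ⟨u, hu, hlt⟩
    obtain ⟨⟨x, y⟩, he, rfl⟩ := mem_image.1 hu
    obtain ⟨a, b, hab, heA, hxy⟩ := pathNetwork_exists_forward_mem_EA he
    refine ⟨_, sub_pos.2 hlt, _, _,
      pathNetwork_valid_forwardFlow hab (sub_nonneg.2 hlt.le) (by rw [hxy]; linarith), ?_,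
      pathNetwork_flowOf_forwardFlow _⟩
    simp [ISACNetwork.sensOf_single, heA]

/-- In a one-dimensional ISAC network with nonempty sensing link set `U(A)`,
free sensing occurs (there is `s > 0` with `(s, f*) ∈ R`) if and only if some
sensing link has capacity strictly above the bottleneck `c_min`. -/
theorem oneD_free_sensing {K : ℕ} (hK : 2 ≤ K) (cap : Sym2 (Fin K) → ℝ)
    (hcap : ∀ u, 0 ≤ cap u) (A : Finset (Fin K))
    (hUA : (pathNetwork K hK cap hcap A).UA.Nonempty)
    (fstar : ℝ)
    (hfstar : IsGreatest
      {f : ℝ | ∃ s : ℝ, (s, f) ∈ (pathNetwork K hK cap hcap A).Region} fstar) :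
    (∃ s : ℝ, 0 < s ∧ (s, fstar) ∈ (pathNetwork K hK cap hcap A).Region) ↔
      ∃ u ∈ (pathNetwork K hK cap hcap A).UA, cmin K hK cap < cap u :=
  oneD_free_sensing_general hK cap hcap A fstar hfstar
end

section
/- For every ISAC network, the maximum free-communication throughput f̃ := max{f : (s*, f) ∈ R}, where s* = Σ_{u ∈ U(A)} c_u is the maximum sensing fidelity, satisfies f̃ > 0 if and only if there exists a directed path from T_x to R_x in (V, E) that uses no link of E(A) and all of whose links lie on undirected links of strictly positive capacity. -/
/-! At full sensing fidelity every link of `E(A)` is saturated by sensing, so communication can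
only use the links outside `E(A)` of positive capacity. If the throughput is positive, a cut
around the nodes reachable from `Tx` along such links shows that `Rx` is among them. Conversely,
along a simple such path from `Tx` to `Rx` one may route a flow of rate at most half of every
capacity on it, keeping the other half of each capacity (and all of it on `E(A)`) for sensing. -/

theorem exists_pos_forall_le_of_pos {ι : Type*} [Fintype ι] {g : ι → ℝ} (hg : ∀ i, 0 < g i) :
    ∃ ε > 0, ∀ i, ε ≤ g i := by
  cases isEmpty_or_nonempty ι
  · exact ⟨1, one_pos, isEmptyElim⟩
  · exact ⟨Finset.univ.inf' Finset.univ_nonempty g,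
      (Finset.lt_inf'_iff _).2 fun i _ => hg i, fun i => Finset.inf'_le _ (Finset.mem_univ i)⟩

theorem Finset.sum_out_le_sum_in_of_closed {V : Type*} [Fintype V] {w : V → V → ℝ}
    (hw : ∀ i j, 0 ≤ w i j) {S : Finset V} (hS : ∀ j k, j ∈ S → 0 < w j k → k ∈ S) :
    ∑ j ∈ S, ∑ k, w j k ≤ ∑ k ∈ S, ∑ j, w j k :=
  calc ∑ j ∈ S, ∑ k, w j k = ∑ j ∈ S, ∑ k ∈ S, w j k := by
        refine Finset.sum_congr rfl fun j hj => (Finset.sum_subset S.subset_univ fun k _ hk => ?_).symm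
        exact le_antisymm (not_lt.1 fun h => hk (hS j k hj h)) (hw j k)
    _ = ∑ k ∈ S, ∑ j ∈ S, w j k := Finset.sum_comm
    _ ≤ ∑ k ∈ S, ∑ j, w j k := Finset.sum_le_sum fun k _ =>
        Finset.sum_le_sum_of_subset_of_nonneg S.subset_univ fun j _ _ => hw j k

namespace SimpleGraph

variable {V : Type*} {G : SimpleGraph V}

theorem reachable_of_fin_path {n : ℕ} {p : Fin (n + 1) → V}
    (hp : ∀ i : Fin n, G.Adj (p i.castSucc) (p i.succ)) : G.Reachable (p 0) (p (Fin.last n)) := by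
  induction n with
  | zero => rfl
  | succ n ih =>
    exact (ih (p := Fin.init p) fun i => hp i.castSucc).trans (hp (Fin.last n)).reachable

theorem Reachable.exists_injective_fin_path {u v : V} (h : G.Reachable u v) :
    ∃ (n : ℕ) (p : Fin (n + 1) → V), Function.Injective p ∧ p 0 = u ∧ p (Fin.last n) = v ∧
      ∀ i : Fin n, G.Adj (p i.castSucc) (p i.succ) := by
  classical
  obtain ⟨w⟩ := h
  obtain ⟨q, hq⟩ := w.toPath
  refine ⟨q.length, fun i => q.getVert i, fun i j hij => Fin.ext ?_, q.getVert_zero,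
    q.getVert_length, fun i => q.adj_getVert_succ i.2⟩
  exact hq.getVert_injOn (Nat.lt_succ_iff.mp i.2) (Nat.lt_succ_iff.mp j.2) hij

end SimpleGraph

namespace ISACNetwork

variable {V : Type} [Fintype V] [DecidableEq V] (N : ISACNetwork V)

def inflow (f : V × V → ℝ) (j : V) : ℝ :=
  ∑ i ∈ Finset.univ.filter (fun i => (i, j) ∈ N.E), f (i, j)

def outflow (f : V × V → ℝ) (j : V) : ℝ :=
  ∑ k ∈ Finset.univ.filter (fun k => (j, k) ∈ N.E), f (j, k)

theorem mem_E_of_mem_EA {e : V × V} (h : e ∈ N.EA) : e ∈ N.E :=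
  (Finset.mem_filter.1 h).1

theorem swap_mem_EA {i j : V} (h : (i, j) ∈ N.EA) : (j, i) ∈ N.EA := by
  obtain ⟨hE, hi, hj⟩ := Finset.mem_filter.1 h
  exact Finset.mem_filter.2 ⟨N.symm i j hE, hj, hi⟩

/-- The links still usable for communication at full sensing fidelity `s*`. -/
def freeGraph : SimpleGraph V where
  Adj i j := (i, j) ∈ N.E ∧ (i, j) ∉ N.EA ∧ 0 < N.c (Sym2.mk i j)
  symm := ⟨fun i j ⟨hE, hA, hc⟩ =>
    ⟨N.symm i j hE, fun h => hA (N.swap_mem_EA h), Sym2.eq_swap ▸ hc⟩⟩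
  loopless := ⟨fun i h => N.irrefl i h.1⟩

theorem sum_UA_c_eq_sum_EA {ca : V × V → ℝ}
    (hca : ∀ i j : V, (i, j) ∈ N.E → ca (i, j) + ca (j, i) = N.c (Sym2.mk i j)) :
    ∑ u ∈ N.UA, N.c u = ∑ e ∈ N.EA, ca e := by
  refine Finset.sum_image' ca fun ⟨i, j⟩ hij => ?_
  have hji := N.swap_mem_EA hij
  have hne : (i, j) ≠ (j, i) := by
    intro h
    obtain rfl : i = j := (Prod.ext_iff.1 h).1
    exact N.irrefl i (N.mem_E_of_mem_EA hij)
  have hfiber : N.EA.filter (fun e => Sym2.mk e.1 e.2 = Sym2.mk i j) = {(i, j), (j, i)} := by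
    ext ⟨a, b⟩
    simp only [Finset.mem_filter, Finset.mem_insert, Finset.mem_singleton, Sym2.eq_iff, Prod.mk.injEq]
    constructor
    · exact fun h => h.2
    · rintro (⟨rfl, rfl⟩ | ⟨rfl, rfl⟩)
      · exact ⟨hij, .inl ⟨rfl, rfl⟩⟩
      · exact ⟨hji, .inr ⟨rfl, rfl⟩⟩
  rw [hfiber, Finset.sum_pair hne]
  exact (hca i j (N.mem_E_of_mem_EA hij)).symm

variable {N} {f s : V × V → ℝ}

theorem Valid.flow_le_capacity (hv : N.Valid f s) {i j : V} (hij : (i, j) ∈ N.E) :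
    f (i, j) ≤ N.c (Sym2.mk i j) := by
  obtain ⟨-, hsnn, ca, hcann, hsplit, hcap, -⟩ := hv
  linarith [hcap _ hij, hsnn _ hij, hcann _ (N.symm i j hij), hsplit i j hij]

/-- At full sensing fidelity the sensing rates use up every link of `E(A)`. -/
theorem Valid.flow_eq_zero_of_mem_EA (hv : N.Valid f s)
    (hs : N.sensOf s = ∑ u ∈ N.UA, N.c u) {e : V × V} (he : e ∈ N.EA) : f e = 0 := by
  obtain ⟨hfnn, -, ca, -, hsplit, hcap, -⟩ := hv
  have hfnn' : ∀ e ∈ N.EA, 0 ≤ f e := fun e he => hfnn e (N.mem_E_of_mem_EA he)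
  have hsum : ∑ e ∈ N.EA, f e + N.sensOf s ≤ ∑ u ∈ N.UA, N.c u := by
    rw [sensOf, ← Finset.sum_add_distrib, N.sum_UA_c_eq_sum_EA hsplit]
    exact Finset.sum_le_sum fun e he => hcap e (N.mem_E_of_mem_EA he)
  exact (Finset.sum_eq_zero_iff_of_nonneg hfnn').1
    (le_antisymm (by linarith) (Finset.sum_nonneg hfnn')) e he

theorem Valid.freeGraph_adj (hv : N.Valid f s) (hs : N.sensOf s = ∑ u ∈ N.UA, N.c u)
    {i j : V} (hij : (i, j) ∈ N.E) (hf : 0 < f (i, j)) : N.freeGraph.Adj i j :=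
  ⟨hij, fun hA => hf.ne' (hv.flow_eq_zero_of_mem_EA hs hA), hf.trans_le (hv.flow_le_capacity hij)⟩

/-- Cut argument: the nodes reachable from `Tx` in `freeGraph` receive all the flow leaving them,
so if `Rx` were not among them the net outflow of `Tx` would be `≤ 0`. -/
theorem Valid.reachable (hv : N.Valid f s) (hs : N.sensOf s = ∑ u ∈ N.UA, N.c u)
    (hf : 0 < N.flowOf f) : N.freeGraph.Reachable N.Tx N.Rx := by
  classical
  have hadj : ∀ {j k}, (j, k) ∈ N.E → 0 < f (j, k) → N.freeGraph.Adj j k := hv.freeGraph_adj hs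
  obtain ⟨hfnn, -, -, -, -, -, hTx, -, hcons⟩ := hv
  by_contra hRx
  set w : V → V → ℝ := fun i j => if (i, j) ∈ N.E then f (i, j) else 0
  set S := Finset.univ.filter (N.freeGraph.Reachable N.Tx)
  have hw : ∀ i j, 0 ≤ w i j := fun i j => by
    simp only [w]
    split_ifs with h
    exacts [hfnn _ h, le_rfl]
  have hclosed : ∀ j k, j ∈ S → 0 < w j k → k ∈ S := by
    intro j k hj hjk
    have hE : (j, k) ∈ N.E := by by_contra h; simp [w, h] at hjk
    simp only [w, if_pos hE] at hjk
    simp only [S, Finset.mem_filter, Finset.mem_univ, true_and] at hj ⊢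
    exact hj.trans (hadj hE hjk).reachable
  have hout : ∀ j, N.outflow f j = ∑ k, w j k := fun j => Finset.sum_filter _ _
  have hin : ∀ j, N.inflow f j = ∑ i, w i j := fun j => Finset.sum_filter _ _
  have hnet : ∑ j ∈ S, (N.outflow f j - N.inflow f j) = N.flowOf f := by
    rw [Finset.sum_eq_single_of_mem N.Tx (by simp [S])]
    · have hin0 : N.inflow f N.Tx = 0 :=
        Finset.sum_eq_zero fun i hi => hTx i (Finset.mem_filter.1 hi).2
      rw [hin0, sub_zero]
      rfl
    · intro j hj hjTx
      have hjRx : j ≠ N.Rx := by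
        rintro rfl
        exact hRx (Finset.mem_filter.1 hj).2
      exact sub_eq_zero.2 (hcons j hjTx hjRx).symm
  have := Finset.sum_out_le_sum_in_of_closed hw hclosed
  simp only [Finset.sum_sub_distrib, hout, hin] at hnet
  linarith

/-- Sensing may be raised to the whole split capacity of every link of `E(A)`. -/
theorem Valid.mem_region_full_sensing (hv : N.Valid f s) (hA : ∀ e ∈ N.EA, f e = 0) :
    (∑ u ∈ N.UA, N.c u, N.flowOf f) ∈ N.Region := by
  obtain ⟨hfnn, hsnn, ca, hcann, hsplit, hcap, hTx, hRx, hcons⟩ := hv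
  refine ⟨f, fun e => if e ∈ N.EA then ca e else s e,
    ⟨hfnn, fun e he => ?_, ca, hcann, hsplit, fun e he => ?_, hTx, hRx, hcons⟩, ?_, rfl⟩
  · beta_reduce
    split_ifs
    exacts [hcann e he, hsnn e he]
  · beta_reduce
    split_ifs with h
    · rw [hA e h, zero_add]
    · exact hcap e he
  · rw [N.sum_UA_c_eq_sum_EA hsplit]
    exact Finset.sum_congr rfl fun e he => if_pos he

end ISACNetwork

section walkFlow

variable {V : Type*} [DecidableEq V] {n : ℕ} (p : Fin (n + 1) → V) (ε : ℝ)

def walkFlow (e : V × V) : ℝ :=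
  ∑ t : Fin n, if (p t.castSucc, p t.succ) = e then ε else 0

theorem walkFlow_nonneg (hε : 0 ≤ ε) (e : V × V) : 0 ≤ walkFlow p ε e :=
  Finset.sum_nonneg fun t _ => by split_ifs <;> [exact hε; exact le_rfl]

variable {p ε}

theorem walkFlow_eq_zero {e : V × V} (he : ∀ t : Fin n, (p t.castSucc, p t.succ) ≠ e) :
    walkFlow p ε e = 0 :=
  Finset.sum_eq_zero fun t _ => if_neg (he t)

theorem walkFlow_le_of_injective (hp : Function.Injective p) {g : V × V → ℝ}
    (hg : ∀ e, 0 ≤ g e) (hεg : ∀ t : Fin n, ε ≤ g (p t.castSucc, p t.succ)) (e : V × V) :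
    walkFlow p ε e ≤ g e := by
  by_cases he : ∃ t : Fin n, (p t.castSucc, p t.succ) = e
  · obtain ⟨t, rfl⟩ := he
    have hstep : ∀ t' : Fin n, (p t'.castSucc, p t'.succ) = (p t.castSucc, p t.succ) ↔ t' = t :=
      fun t' => ⟨fun h => Fin.castSucc_injective _ (hp (Prod.ext_iff.1 h).1), fun h => h ▸ rfl⟩
    simp only [walkFlow, hstep, Finset.sum_ite_eq', Finset.mem_univ, if_true]
    exact hεg t
  · rw [walkFlow_eq_zero (not_exists.1 he)]
    exact hg e

variable (p ε)

/-- Both sides count the visits of `p` to `j`. -/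
theorem walkFlow_balance (j : V) :
    (if p 0 = j then ε else 0) + ∑ t : Fin n, (if p t.succ = j then ε else 0) =
      ∑ t : Fin n, (if p t.castSucc = j then ε else 0) + if p (Fin.last n) = j then ε else 0 := by
  rw [← Fin.sum_univ_succ (f := fun t => if p t = j then ε else 0), Fin.sum_univ_castSucc]

end walkFlow

namespace ISACNetwork

variable {V : Type} [Fintype V] [DecidableEq V] {N : ISACNetwork V} {n : ℕ} {p : Fin (n + 1) → V}

theorem inflow_walkFlow (hp : ∀ t : Fin n, (p t.castSucc, p t.succ) ∈ N.E) (ε : ℝ) (j : V) :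
    N.inflow (walkFlow p ε) j = ∑ t : Fin n, if p t.succ = j then ε else 0 := by
  unfold inflow walkFlow
  rw [Finset.sum_comm]
  refine Finset.sum_congr rfl fun t _ => ?_
  by_cases h : p t.succ = j
  · subst h
    simp [hp t]
  · simp [h]

theorem outflow_walkFlow (hp : ∀ t : Fin n, (p t.castSucc, p t.succ) ∈ N.E) (ε : ℝ) (j : V) :
    N.outflow (walkFlow p ε) j = ∑ t : Fin n, if p t.castSucc = j then ε else 0 := by
  unfold outflow walkFlow
  rw [Finset.sum_comm]
  refine Finset.sum_congr rfl fun t _ => ?_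
  by_cases h : p t.castSucc = j
  · subst h
    simp [hp t]
  · simp [h]

theorem valid_walkFlow (hp : Function.Injective p) (h0 : p 0 = N.Tx) (hl : p (Fin.last n) = N.Rx)
    (hadj : ∀ t : Fin n, N.freeGraph.Adj (p t.castSucc) (p t.succ)) {ε : ℝ} (hε : 0 ≤ ε)
    (hεc : ∀ t : Fin n, ε ≤ N.c (Sym2.mk (p t.castSucc) (p t.succ)) / 2) :
    N.Valid (walkFlow p ε) 0 := by
  have hE : ∀ t : Fin n, (p t.castSucc, p t.succ) ∈ N.E := fun t => (hadj t).1
  have hnotTx : ∀ t : Fin n, p t.succ ≠ N.Tx := fun t h => t.succ_ne_zero (hp (h.trans h0.symm))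
  have hnotRx : ∀ t : Fin n, p t.castSucc ≠ N.Rx :=
    fun t h => t.castSucc_ne_last (hp (h.trans hl.symm))
  have hhalf : ∀ e : V × V, 0 ≤ N.c (Sym2.mk e.1 e.2) / 2 :=
    fun e => div_nonneg (N.c_nonneg _) zero_le_two
  refine ⟨fun e _ => walkFlow_nonneg p ε hε e, fun _ _ => le_rfl,
    fun e => N.c (Sym2.mk e.1 e.2) / 2, fun e _ => hhalf e, fun i j _ => ?_, fun e _ => ?_,
    fun i _ => walkFlow_eq_zero fun t h => hnotTx t (Prod.ext_iff.1 h).2,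
    fun j _ => walkFlow_eq_zero fun t h => hnotRx t (Prod.ext_iff.1 h).1, fun j hjTx hjRx => ?_⟩
  · beta_reduce
    rw [Sym2.eq_swap]
    ring
  · rw [Pi.zero_apply, add_zero]
    exact walkFlow_le_of_injective hp hhalf hεc e
  · change N.inflow _ j = N.outflow _ j
    have hbal := walkFlow_balance p ε j
    rw [if_neg (h0 ▸ Ne.symm hjTx), if_neg (hl ▸ Ne.symm hjRx), zero_add, add_zero] at hbal
    rw [inflow_walkFlow hE, outflow_walkFlow hE, hbal]

theorem flowOf_walkFlow (hp : Function.Injective p) (h0 : p 0 = N.Tx) (hl : p (Fin.last n) = N.Rx)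
    (hE : ∀ t : Fin n, (p t.castSucc, p t.succ) ∈ N.E) (ε : ℝ) : N.flowOf (walkFlow p ε) = ε := by
  have hbal := walkFlow_balance p ε N.Tx
  have hin : ∑ t : Fin n, (if p t.succ = N.Tx then ε else 0) = 0 :=
    Finset.sum_eq_zero fun t _ => if_neg fun h => t.succ_ne_zero (hp (h.trans h0.symm))
  rw [if_pos h0, if_neg fun h => N.TxNeRx (h.symm.trans hl), hin, add_zero, add_zero] at hbal
  change N.outflow _ N.Tx = ε
  rw [outflow_walkFlow hE]
  exact hbal.symm

theorem exists_pos_mem_region_of_reachable (h : N.freeGraph.Reachable N.Tx N.Rx) :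
    ∃ φ > 0, (∑ u ∈ N.UA, N.c u, φ) ∈ N.Region := by
  obtain ⟨n, p, hp, h0, hl, hadj⟩ := h.exists_injective_fin_path
  obtain ⟨ε, hε, hεc⟩ := exists_pos_forall_le_of_pos fun t : Fin n => half_pos (hadj t).2.2
  refine ⟨ε, hε, ?_⟩
  rw [← flowOf_walkFlow hp h0 hl (fun t => (hadj t).1) ε]
  exact (valid_walkFlow hp h0 hl hadj hε.le hεc).mem_region_full_sensing
    fun e he => walkFlow_eq_zero fun t h => (hadj t).2.1 (h ▸ he)

end ISACNetwork

/-- The maximum free-communication throughput `f̃ = max{f : (s*, f) ∈ R}` is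
strictly positive if and only if there is a directed path from `Tx` to `Rx`
avoiding all links of `E(A)` and using only links whose underlying undirected
links have strictly positive capacity. -/
theorem free_communication_iff_path {V : Type} [Fintype V] [DecidableEq V]
    (N : ISACNetwork V) (ftil : ℝ)
    (hftil : IsGreatest
      {f : ℝ | (∑ u ∈ N.UA, N.c u, f) ∈ N.Region} ftil) :
    0 < ftil ↔ ∃ (n : ℕ) (p : Fin (n + 1) → V),
      p 0 = N.Tx ∧ p (Fin.last n) = N.Rx ∧
      ∀ i : Fin n, (p i.castSucc, p i.succ) ∈ N.E ∧
        (p i.castSucc, p i.succ) ∉ N.EA ∧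
        0 < N.c (Sym2.mk (p i.castSucc) (p i.succ)) := by
  constructor
  · intro hpos
    obtain ⟨f, s, hv, hs, hf⟩ := hftil.1
    obtain ⟨n, p, -, h0, hl, hadj⟩ := (hv.reachable hs (hf ▸ hpos)).exists_injective_fin_path
    exact ⟨n, p, h0, hl, hadj⟩
  · rintro ⟨n, p, h0, hl, hadj⟩
    have hreach := SimpleGraph.reachable_of_fin_path (G := N.freeGraph) hadj
    rw [h0, hl] at hreach
    obtain ⟨φ, hφ, hmem⟩ := N.exists_pos_mem_region_of_reachable hreach
    exact hφ.trans_le (hftil.2 hmem)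
end
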